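/- arXiv:2204.07766 — 2 statements merged into one kernel-verified Lean document; each statement's English description precedes it below -/
import Mathlib

section
/- Let f: ℝ → ℝⁿ be continuously differentiable and T-periodic with f and f' bounded, and let (s,ṡ,φ) solve the system s̈ = f''(φ) − B(ṡ − f'(φ)) − K(s − f(φ)), φ̇ = 1 + γ((s−f(φ))ᵀK f'(φ) + (ṡ−f'(φ))ᵀ f''(φ)) with B, K symmetric positive definite and γ ≥ 0. Then the function V₁(t) = ½ (s−f(φ))ᵀ K (s−f(φ)) + ½ ‖ṡ−f'(φ)‖² is nonincreasing along solutions; specifically V̇₁ = −γ((s−f(φ))ᵀK f'(φ) + (ṡ−f'(φ))ᵀf''(φ))² − (ṡ−f'(φ))ᵀ B (ṡ−f'(φ)) ≤ 0. -/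
/-!
With `e = s - f ∘ φ`, `d = s' - f' ∘ φ` and `P` the bracket in the phase equation, the chain rule
and the two equations of motion give `e' = d - γP f'(φ)` and `d' = -Bd - Ke - γP f''(φ)`.
Since `K` is symmetric, `V₁' = e' ⬝ Ke + d' ⬝ d`: the coupling terms `±d ⬝ Ke` cancel and the
phase terms add up to `-γP²`, so `V₁' = -γP² - d ⬝ Bd ≤ 0`.
-/

open Matrix

section Calculus

variable {𝕜 ι κ : Type*} [NontriviallyNormedField 𝕜] [Fintype ι]

theorem HasDerivAt.dotProduct {a b : 𝕜 → ι → 𝕜} {a' b' : ι → 𝕜} {t : 𝕜}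
    (ha : HasDerivAt a a' t) (hb : HasDerivAt b b' t) :
    HasDerivAt (fun u => a u ⬝ᵥ b u) (a' ⬝ᵥ b t + a t ⬝ᵥ b') t := by
  simp only [_root_.dotProduct, ← Finset.sum_add_distrib]
  exact HasDerivAt.fun_sum fun i _ => (hasDerivAt_pi.1 ha i).mul (hasDerivAt_pi.1 hb i)

theorem HasDerivAt.mulVec (M : Matrix κ ι 𝕜) {a : 𝕜 → ι → 𝕜} {a' : ι → 𝕜} {t : 𝕜}
    (ha : HasDerivAt a a' t) :
    HasDerivAt (fun u => M *ᵥ a u) (M *ᵥ a') t :=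
  hasDerivAt_pi.2 fun i =>
    HasDerivAt.fun_sum fun j _ => (hasDerivAt_pi.1 ha j).const_mul (M i j)

end Calculus

theorem Matrix.IsSymm.dotProduct_mulVec_comm {ι R : Type*} [Fintype ι] [CommSemiring R]
    {K : Matrix ι ι R} (hK : K.IsSymm) (v w : ι → R) :
    v ⬝ᵥ (K *ᵥ w) = w ⬝ᵥ (K *ᵥ v) := by
  rw [dotProduct_mulVec, ← mulVec_transpose, hK.eq, dotProduct_comm]

section Quadratic

variable {ι : Type*} [Fintype ι] {e : ℝ → ι → ℝ} {e' : ι → ℝ} {t : ℝ}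

theorem HasDerivAt.half_dotProduct_mulVec_self {K : Matrix ι ι ℝ} (hK : K.IsSymm)
    (he : HasDerivAt e e' t) :
    HasDerivAt (fun u => 1 / 2 * (e u ⬝ᵥ (K *ᵥ e u))) (e' ⬝ᵥ (K *ᵥ e t)) t := by
  refine ((he.dotProduct (he.mulVec K)).const_mul (1 / 2 : ℝ)).congr_deriv ?_
  rw [hK.dotProduct_mulVec_comm e']
  ring

theorem HasDerivAt.half_dotProduct_self (he : HasDerivAt e e' t) :
    HasDerivAt (fun u => 1 / 2 * (e u ⬝ᵥ e u)) (e' ⬝ᵥ e t) t := by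
  classical
  simpa only [one_mulVec] using he.half_dotProduct_mulVec_self (isSymm_one (n := ι))

end Quadratic

/-- The derivative of `½ eᵀKe + ½ dᵀd` along `e' = d - c a`, `d' = -Bd - Ke - c b`. -/
theorem Matrix.IsSymm.energy_dissipation_identity {ι R : Type*} [Fintype ι] [CommRing R]
    {K : Matrix ι ι R} (hK : K.IsSymm) (B : Matrix ι ι R) (e d a b : ι → R) (c : R) :
    (d - c • a) ⬝ᵥ (K *ᵥ e) + (-(B *ᵥ d) - K *ᵥ e - c • b) ⬝ᵥ d
      = -c * (e ⬝ᵥ (K *ᵥ a) + d ⬝ᵥ b) - d ⬝ᵥ (B *ᵥ d) := by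
  rw [hK.dotProduct_mulVec_comm e a, dotProduct_comm _ d]
  simp only [sub_dotProduct, dotProduct_sub, dotProduct_neg, smul_dotProduct,
    dotProduct_smul, smul_eq_mul]
  ring

theorem lyapunov_nonincreasing_general (n : ℕ)
    (B K : Matrix (Fin n) (Fin n) ℝ) (hB : B.PosDef) (hK : K.PosDef)
    (γ : ℝ) (hγ : 0 ≤ γ)
    (f f' f'' : ℝ → Fin n → ℝ)
    (hf : ∀ x, HasDerivAt f (f' x) x) (hf' : ∀ x, HasDerivAt f' (f'' x) x)
    (s s' s'' : ℝ → Fin n → ℝ) (φ φ' : ℝ → ℝ)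
    (hs : ∀ t, HasDerivAt s (s' t) t) (hs' : ∀ t, HasDerivAt s' (s'' t) t)
    (hφ : ∀ t, HasDerivAt φ (φ' t) t)
    (hode1 : ∀ t, s'' t =
      f'' (φ t) - B *ᵥ (s' t - f' (φ t)) - K *ᵥ (s t - f (φ t)))
    (hode2 : ∀ t, φ' t = 1 + γ *
      ((s t - f (φ t)) ⬝ᵥ (K *ᵥ f' (φ t)) + (s' t - f' (φ t)) ⬝ᵥ f'' (φ t))) :
    ∀ t, HasDerivAt (fun u =>
        (1 / 2) * ((s u - f (φ u)) ⬝ᵥ (K *ᵥ (s u - f (φ u)))) +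
        (1 / 2) * ((s' u - f' (φ u)) ⬝ᵥ (s' u - f' (φ u))))
      (-γ * ((s t - f (φ t)) ⬝ᵥ (K *ᵥ f' (φ t)) +
              (s' t - f' (φ t)) ⬝ᵥ f'' (φ t)) ^ 2
        - (s' t - f' (φ t)) ⬝ᵥ (B *ᵥ (s' t - f' (φ t)))) t ∧
    (-γ * ((s t - f (φ t)) ⬝ᵥ (K *ᵥ f' (φ t)) +
            (s' t - f' (φ t)) ⬝ᵥ f'' (φ t)) ^ 2
      - (s' t - f' (φ t)) ⬝ᵥ (B *ᵥ (s' t - f' (φ t)))) ≤ 0 := by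
  intro t
  set e := s t - f (φ t)
  set d := s' t - f' (φ t)
  set P := e ⬝ᵥ (K *ᵥ f' (φ t)) + d ⬝ᵥ f'' (φ t)
  have hK_symm : K.IsSymm := isHermitian_iff_isSymm.mp hK.isHermitian
  have he : HasDerivAt (fun u => s u - f (φ u)) (d - (γ * P) • f' (φ t)) t := by
    refine ((hs t).sub ((hf (φ t)).scomp t (hφ t))).congr_deriv ?_
    rw [hode2 t]
    module
  have hd : HasDerivAt (fun u => s' u - f' (φ u))
      (-(B *ᵥ d) - K *ᵥ e - (γ * P) • f'' (φ t)) t := by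
    refine ((hs' t).sub ((hf' (φ t)).scomp t (hφ t))).congr_deriv ?_
    rw [hode1 t, hode2 t]
    module
  have hdamp : 0 ≤ d ⬝ᵥ (B *ᵥ d) := by simpa using hB.posSemidef.dotProduct_mulVec_nonneg d
  refine ⟨?_, by nlinarith [mul_nonneg hγ (sq_nonneg P)]⟩
  refine ((he.half_dotProduct_mulVec_self hK_symm).add hd.half_dotProduct_self).congr_deriv ?_
  rw [hK_symm.energy_dissipation_identity]
  ring

theorem lyapunov_nonincreasing (n : ℕ)
    (B K : Matrix (Fin n) (Fin n) ℝ) (hB : B.PosDef) (hK : K.PosDef)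
    (γ : ℝ) (hγ : 0 ≤ γ) (T : ℝ) (hT : 0 < T)
    (f f' f'' : ℝ → Fin n → ℝ)
    (hf : ∀ x, HasDerivAt f (f' x) x) (hf' : ∀ x, HasDerivAt f' (f'' x) x)
    (hf''c : Continuous f'')
    (hper : ∀ x, f (x + T) = f x)
    (hfb : ∃ M, ∀ x, ‖f x‖ ≤ M) (hf'b : ∃ M, ∀ x, ‖f' x‖ ≤ M)
    (s s' s'' : ℝ → Fin n → ℝ) (φ φ' : ℝ → ℝ)
    (hs : ∀ t, HasDerivAt s (s' t) t) (hs' : ∀ t, HasDerivAt s' (s'' t) t)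
    (hφ : ∀ t, HasDerivAt φ (φ' t) t)
    (hode1 : ∀ t, s'' t =
      f'' (φ t) - B *ᵥ (s' t - f' (φ t)) - K *ᵥ (s t - f (φ t)))
    (hode2 : ∀ t, φ' t = 1 + γ *
      ((s t - f (φ t)) ⬝ᵥ (K *ᵥ f' (φ t)) + (s' t - f' (φ t)) ⬝ᵥ f'' (φ t))) :
    ∀ t, HasDerivAt (fun u =>
        (1 / 2) * ((s u - f (φ u)) ⬝ᵥ (K *ᵥ (s u - f (φ u)))) +
        (1 / 2) * ((s' u - f' (φ u)) ⬝ᵥ (s' u - f' (φ u))))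
      (-γ * ((s t - f (φ t)) ⬝ᵥ (K *ᵥ f' (φ t)) +
              (s' t - f' (φ t)) ⬝ᵥ f'' (φ t)) ^ 2
        - (s' t - f' (φ t)) ⬝ᵥ (B *ᵥ (s' t - f' (φ t)))) t ∧
    (-γ * ((s t - f (φ t)) ⬝ᵥ (K *ᵥ f' (φ t)) +
            (s' t - f' (φ t)) ⬝ᵥ f'' (φ t)) ^ 2
      - (s' t - f' (φ t)) ⬝ᵥ (B *ᵥ (s' t - f' (φ t)))) ≤ 0 :=
  lyapunov_nonincreasing_general n B K hB hK γ hγ f f' f'' hf hf' s s' s'' φ φ' hs hs' hφ hode1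
    hode2
end

section
/- Let δ_y, δ_v ∈ (ℝ⁺)ⁿ be vectors of positive reals, y_avg ∈ ℝⁿ, and f: ℝ → ℝⁿ differentiable. Suppose for all φ and each coordinate i: δ_{y,i}² |f_i'(φ)| ≤ |δ_{y,i}² − (f_i(φ) − y_{avg,i})²| δ_{v,i}, and |f_i(φ) − y_{avg,i}| < δ_{y,i}. Define g_p(φ)_i = artanh((f_i(φ) − y_{avg,i})/δ_{y,i}) and g_v(φ)_i = artanh(f_i'(φ)/δ_{v,i}) (assuming |f_i'| < δ_{v,i}). Then for every bounded s₁ ∈ ℝⁿ, each component of J_{s₁} J_{g_p}⁻¹ tanh(g_v) has absolute value at most 1, where J_{s₁} = diag(δ_{y,i}(1 − tanh²(s₁,i))) and J_{g_p} = diag(δ_{y,i}(1 − tanh²(g_{p,i}))); hence ψ = artanh(J_{s₁} J_{g_p}⁻¹ tanh(g_v)) is well-defined whenever the strict inequality holds. -/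
noncomputable def artanh (x : ℝ) : ℝ := (1 / 2) * Real.log ((1 + x) / (1 - x))

lemma tanh_artanh {x : ℝ} (h : |x| < 1) : Real.tanh (artanh x) = x := by
  have h1 : -1 < x := by linarith [abs_lt.mp h |>.1]
  have h2 : x < 1 := (abs_lt.mp h).2
  have ht : 0 < (1 + x) / (1 - x) := div_pos (by linarith) (by linarith)
  have he2 : Real.exp (artanh x) ^ 2 = (1 + x) / (1 - x) := by
    rw [← Real.exp_nat_mul, artanh, show ((2:ℕ):ℝ) * (1/2 * Real.log ((1+x)/(1-x))) = Real.log ((1+x)/(1-x)) by push_cast; ring]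
    exact Real.exp_log ht
  have hepos : 0 < Real.exp (artanh x) := Real.exp_pos _
  rw [Real.tanh_eq_sinh_div_cosh, Real.sinh_eq, Real.cosh_eq, Real.exp_neg]
  have hne : Real.exp (artanh x) ≠ 0 := ne_of_gt hepos
  rw [div_eq_iff (by positivity)]
  have key : Real.exp (artanh x) ^ 2 * (1 - x) = 1 + x := by
    rw [he2, div_mul_cancel₀ _ (by linarith : (1:ℝ) - x ≠ 0)]
  field_simp
  nlinarith [key]

theorem psi_well_defined (n : ℕ)
    (δy δv : Fin n → ℝ) (hδy : ∀ i, 0 < δy i) (hδv : ∀ i, 0 < δv i)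
    (yavg : Fin n → ℝ) (f f' : ℝ → Fin n → ℝ)
    (hf : ∀ x, HasDerivAt f (f' x) x)
    (hbound : ∀ φ i, |f φ i - yavg i| < δy i)
    (hvel : ∀ φ i, |f' φ i| < δv i)
    (hineq : ∀ φ i, (δy i) ^ 2 * |f' φ i| ≤
      |(δy i) ^ 2 - (f φ i - yavg i) ^ 2| * δv i) :
    ∀ (s₁ : Fin n → ℝ) (φ : ℝ) (i : Fin n),
      |δy i * (1 - Real.tanh (s₁ i) ^ 2) *
        Real.tanh (artanh (f' φ i / δv i)) /
        (δy i * (1 - Real.tanh (artanh ((f φ i - yavg i) / δy i)) ^ 2))| ≤ 1 := by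
  intro s₁ φ i
  set D := δy i with hD
  set V := δv i with hV
  set d := f φ i - yavg i with hd
  set F := f' φ i with hF
  have hDpos : 0 < D := hδy i
  have hVpos : 0 < V := hδv i
  have hdD : |d / D| < 1 := by
    rw [abs_div, abs_of_pos hDpos]
    exact (div_lt_one hDpos).mpr (hbound φ i)
  have hFV : |F / V| < 1 := by
    rw [abs_div, abs_of_pos hVpos]
    exact (div_lt_one hVpos).mpr (hvel φ i)
  rw [tanh_artanh hdD, tanh_artanh hFV]
  have hd2 : d ^ 2 < D ^ 2 := by
    have := hbound φ i
    nlinarith [abs_nonneg d, sq_abs d]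
  have hineq' : D ^ 2 * |F| ≤ (D ^ 2 - d ^ 2) * V := by
    have := hineq φ i
    rwa [abs_of_pos (by linarith : (0:ℝ) < D ^ 2 - d ^ 2)] at this
  have hkey : |F / V| ≤ 1 - (d / D) ^ 2 := by
    rw [div_pow, abs_div, abs_of_pos hVpos,
      show (1 : ℝ) - d ^ 2 / D ^ 2 = (D ^ 2 - d ^ 2) / D ^ 2 by
        field_simp]
    rw [div_le_div_iff₀ hVpos (by positivity)]
    linarith
  have hT : Real.tanh (s₁ i) ^ 2 < 1 := by
    rw [Real.tanh_eq_sinh_div_cosh, Real.sinh_eq, Real.cosh_eq, div_pow]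
    have h1 := Real.exp_pos (s₁ i)
    have h2 := Real.exp_pos (-(s₁ i))
    rw [div_lt_one (by positivity)]
    nlinarith [mul_pos h1 h2]
  have hden : 0 < 1 - (d / D) ^ 2 := by
    nlinarith [abs_nonneg (d/D), sq_abs (d/D)]
  rw [abs_div]
  apply div_le_one_of_le₀
  · rw [abs_mul, abs_mul, abs_of_pos hDpos, abs_of_pos (by linarith : (0:ℝ) < 1 - Real.tanh (s₁ i) ^ 2)]
    calc D * (1 - Real.tanh (s₁ i) ^ 2) * |F / V|
        ≤ D * 1 * (1 - (d / D) ^ 2) := by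
          apply mul_le_mul _ hkey (abs_nonneg _) (by positivity)
          nlinarith [sq_nonneg (Real.tanh (s₁ i))]
      _ = |D * (1 - (d / D) ^ 2)| := by
          rw [abs_of_pos (by positivity)]; ring
  · positivity
end
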